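/- (Heat equation.) Let f : ℝ → ℝ be continuous and of polynomial growth, and set u(t,x) = P_t f(x) for t > 0, x ∈ ℝ. Then for every t > 0 and x ∈ ℝ the partial derivatives ∂u/∂t(t,x) and ∂²u/∂x²(t,x) exist and satisfy ∂u/∂t(t,x) = (1/2)·∂²u/∂x²(t,x). -/

import Mathlib

open MeasureTheory

/-- The heat kernel `p_t(x) = (1/√(2πt)) e^{−x²/(2t)}`. -/
noncomputable def heatKernel (t x : ℝ) : ℝ :=
  (Real.sqrt (2 * Real.pi * t))⁻¹ * Real.exp (-x ^ 2 / (2 * t))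

/-- The heat semigroup `P_t f(x) = ∫_ℝ p_t(x−y) f(y) dy`. -/
noncomputable def heatSemigroup (t : ℝ) (f : ℝ → ℝ) (x : ℝ) : ℝ :=
  ∫ y, heatKernel t (x - y) * f y

/-- `f` is of polynomial growth: `|f(x)| ≤ C(1 + |x|^k)` for some `C ≥ 0`, `k ∈ ℕ`. -/
def PolyGrowth (f : ℝ → ℝ) : Prop :=
  ∃ C : ℝ, ∃ k : ℕ, 0 ≤ C ∧ ∀ x : ℝ, |f x| ≤ C * (1 + |x| ^ k)

/-! The heat kernel itself satisfies `∂ₜ p = ½ ∂ₓ² p`. For `τ ∈ [t/2, 3t/2]` and `|x| ≤ M`, the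
kernel and its first two space derivatives at `x - y` are bounded by `A (1 + |y|)² e^{-y²/(6t)}`,
because `(x - y)² ≥ y²/2 - M²`. Multiplied by a function of polynomial growth this is still an
integrable dominating function, so the space and time derivatives of `P_t f` may all be taken under
the integral sign, and the heat equation passes from the kernel to `P_t f`. -/

open Real Set Filter Topology

noncomputable def polyGaussian (n : ℕ) (b y : ℝ) : ℝ := (1 + |y|) ^ n * exp (-b * y ^ 2)

lemma integrable_polyGaussian {b : ℝ} (hb : 0 < b) (n : ℕ) : Integrable (polyGaussian n b) := by
  have hmoment : Integrable fun x : ℝ => |x| ^ n * exp (-b * x ^ 2) := by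
    simpa [rpow_natCast, abs_mul] using
      (integrable_rpow_mul_exp_neg_mul_sq hb (s := n) (by linarith [n.cast_nonneg (α := ℝ)])).abs
  refine (((integrable_exp_neg_mul_sq hb).add hmoment).const_mul (2 ^ (n - 1))).mono'
    (by unfold polyGaussian; fun_prop) (.of_forall fun x => ?_)
  unfold polyGaussian
  rw [norm_of_nonneg (by positivity)]
  calc (1 + |x|) ^ n * exp (-b * x ^ 2)
      ≤ 2 ^ (n - 1) * (1 ^ n + |x| ^ n) * exp (-b * x ^ 2) := by
        gcongr; exact add_pow_le zero_le_one (abs_nonneg x) n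
    _ = _ := by simp only [Pi.add_apply, one_pow]; ring

lemma PolyGrowth.exists_abs_le_mul_one_add_abs_pow {f : ℝ → ℝ} (hf : PolyGrowth f) :
    ∃ C : ℝ, ∃ k : ℕ, ∀ y, |f y| ≤ C * (1 + |y|) ^ k := by
  obtain ⟨C, k, hC, hfC⟩ := hf
  refine ⟨2 * C, k, fun y => (hfC y).trans ?_⟩
  have h1 : (1 : ℝ) ≤ (1 + |y|) ^ k := one_le_pow₀ (by linarith [abs_nonneg y])
  have h2 : |y| ^ k ≤ (1 + |y|) ^ k := by gcongr; linarith
  nlinarith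

lemma abs_mul_le_of_le_polyGaussian {a c A C b y : ℝ} {n k : ℕ}
    (ha : |a| ≤ A * polyGaussian n b y) (hc : |c| ≤ C * (1 + |y|) ^ k) :
    |a * c| ≤ A * C * polyGaussian (n + k) b y := by
  calc |a * c| = |a| * |c| := abs_mul a c
    _ ≤ A * polyGaussian n b y * (C * (1 + |y|) ^ k) :=
      mul_le_mul ha hc (abs_nonneg c) ((abs_nonneg a).trans ha)
    _ = _ := by unfold polyGaussian; ring

lemma hasDerivAt_integral_mul_of_le_polyGaussian {f : ℝ → ℝ} {K K' : ℝ → ℝ → ℝ} {s₀ A b : ℝ}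
    {n : ℕ} (hf : Continuous f) (hpg : PolyGrowth f) (hb : 0 < b)
    (hK : ∀ s, Continuous (K s)) (hK' : Continuous (K' s₀))
    (hK₀ : ∀ y, |K s₀ y| ≤ A * polyGaussian n b y)
    (hK'_le : ∀ᶠ s in 𝓝 s₀, ∀ y, |K' s y| ≤ A * polyGaussian n b y)
    (hderiv : ∀ᶠ s in 𝓝 s₀, ∀ y, HasDerivAt (K · y) (K' s y) s) :
    HasDerivAt (fun s => ∫ y, K s y * f y) (∫ y, K' s₀ y * f y) s₀ := by
  obtain ⟨C, k, hfC⟩ := hpg.exists_abs_le_mul_one_add_abs_pow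
  have hdom : Integrable fun y => A * C * polyGaussian (n + k) b y :=
    (integrable_polyGaussian hb _).const_mul _
  have hK₀f : Integrable fun y => K s₀ y * f y :=
    hdom.mono' ((hK s₀).mul hf).aestronglyMeasurable
      (.of_forall fun y => abs_mul_le_of_le_polyGaussian (hK₀ y) (hfC y))
  exact (hasDerivAt_integral_of_dominated_loc_of_deriv_le (hK'_le.and hderiv)
    (.of_forall fun s => ((hK s).mul hf).aestronglyMeasurable) hK₀f
    (hK'.mul hf).aestronglyMeasurable
    (.of_forall fun y s hs => abs_mul_le_of_le_polyGaussian (hs.1 y) (hfC y)) hdom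
    (.of_forall fun y s hs => (hs.2 y).mul_const (f y))).2

lemma hasDerivAt_integral_comp_sub_mul {f G G' : ℝ → ℝ} {b : ℝ} {n : ℕ}
    (hf : Continuous f) (hpg : PolyGrowth f) (hb : 0 < b)
    (hG : ∀ z, HasDerivAt G (G' z) z) (hG' : Continuous G')
    (hbound : ∀ M, ∃ A, ∀ x, |x| ≤ M → ∀ y,
      |G (x - y)| ≤ A * polyGaussian n b y ∧ |G' (x - y)| ≤ A * polyGaussian n b y) (x₀ : ℝ) :
    HasDerivAt (fun x => ∫ y, G (x - y) * f y) (∫ y, G' (x₀ - y) * f y) x₀ := by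
  obtain ⟨A, hA⟩ := hbound (|x₀| + 1)
  have hnear : ∀ᶠ x in 𝓝 x₀, |x| < |x₀| + 1 :=
    continuous_abs.continuousAt.eventually_lt continuousAt_const (lt_add_one _)
  have hG_cont : Continuous G := continuous_iff_continuousAt.2 fun z => (hG z).continuousAt
  exact hasDerivAt_integral_mul_of_le_polyGaussian (K := fun x y => G (x - y))
    (K' := fun x y => G' (x - y)) hf hpg hb (fun x => by fun_prop) (by fun_prop)
    (fun y => (hA x₀ (by linarith) y).1)
    (hnear.mono fun x hx y => (hA x hx.le y).2)
    (.of_forall fun x y => (hG (x - y)).comp_sub_const x y)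

noncomputable def heatKernel' (t x : ℝ) : ℝ := -(x / t) * heatKernel t x

noncomputable def heatKernel'' (t x : ℝ) : ℝ := (x ^ 2 / t ^ 2 - 1 / t) * heatKernel t x

@[fun_prop]
lemma continuous_heatKernel (t : ℝ) : Continuous (heatKernel t) := by
  unfold heatKernel; fun_prop

@[fun_prop]
lemma continuous_heatKernel' (t : ℝ) : Continuous (heatKernel' t) := by
  unfold heatKernel'; fun_prop

@[fun_prop]
lemma continuous_heatKernel'' (t : ℝ) : Continuous (heatKernel'' t) := by
  unfold heatKernel''; fun_prop

lemma heatKernel_pos {t : ℝ} (ht : 0 < t) (x : ℝ) : 0 < heatKernel t x := by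
  unfold heatKernel; positivity

lemma hasDerivAt_heatKernel {t : ℝ} (ht : t ≠ 0) (x : ℝ) :
    HasDerivAt (heatKernel t) (heatKernel' t x) x := by
  have hexp : HasDerivAt (fun x => -x ^ 2 / (2 * t)) (-(x / t)) x := by
    refine (((hasDerivAt_pow 2 x).neg).div_const (2 * t)).congr_deriv ?_
    field_simp; ring
  refine (hexp.exp.const_mul (√(2 * π * t))⁻¹).congr_deriv ?_
  unfold heatKernel' heatKernel; ring

lemma hasDerivAt_heatKernel' {t : ℝ} (ht : t ≠ 0) (x : ℝ) :
    HasDerivAt (heatKernel' t) (heatKernel'' t x) x := by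
  refine ((((hasDerivAt_id' x).div_const t).neg).mul (hasDerivAt_heatKernel ht x)).congr_deriv ?_
  unfold heatKernel'' heatKernel'; simp only [Pi.neg_apply]; ring

lemma hasDerivAt_heatKernel_time {t : ℝ} (ht : 0 < t) (x : ℝ) :
    HasDerivAt (fun τ => heatKernel τ x) (1 / 2 * heatKernel'' t x) t := by
  have hpos : 0 < 2 * π * t := by positivity
  have hsqrt : HasDerivAt (fun τ => √(2 * π * τ)) (2 * π / (2 * √(2 * π * t))) t := by
    simpa using ((hasDerivAt_id t).const_mul (2 * π)).sqrt hpos.ne'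
  have hexp : HasDerivAt (fun τ => -x ^ 2 / (2 * τ)) (x ^ 2 / (2 * t ^ 2)) t := by
    refine ((hasDerivAt_const t (-x ^ 2)).div ((hasDerivAt_id' t).const_mul 2)
      (by positivity)).congr_deriv ?_
    field_simp; ring
  refine ((hsqrt.inv (sqrt_pos.2 hpos).ne').mul hexp.exp).congr_deriv ?_
  unfold heatKernel'' heatKernel
  simp only [Pi.inv_apply]
  rw [sq_sqrt hpos.le]
  field_simp
  ring

lemma exp_neg_sq_div_le {t τ M x y : ℝ} (ht : 0 < t) (hτ : τ ∈ Icc (t / 2) (3 * t / 2))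
    (hx : |x| ≤ M) :
    exp (-(x - y) ^ 2 / (2 * τ)) ≤ exp (M ^ 2 / (3 * t)) * exp (-(1 / (6 * t)) * y ^ 2) := by
  rw [← exp_add, exp_le_exp]
  have hxM : x ^ 2 ≤ M ^ 2 := sq_le_sq' (abs_le.1 hx).1 (abs_le.1 hx).2
  -- `(x - y)² + x² - y² / 2 = (2x - y)² / 2`
  have hsq : y ^ 2 / 2 - M ^ 2 ≤ (x - y) ^ 2 := by nlinarith [sq_nonneg (2 * x - y)]
  have hτt : (x - y) ^ 2 / (3 * t) ≤ (x - y) ^ 2 / (2 * τ) :=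
    div_le_div_of_nonneg_left (sq_nonneg _) (by linarith [hτ.1]) (by linarith [hτ.2])
  calc -(x - y) ^ 2 / (2 * τ) = -((x - y) ^ 2 / (2 * τ)) := neg_div _ _
    _ ≤ -((y ^ 2 / 2 - M ^ 2) / (3 * t)) :=
      neg_le_neg ((div_le_div_of_nonneg_right hsq (by positivity)).trans hτt)
    _ = M ^ 2 / (3 * t) + -(1 / (6 * t)) * y ^ 2 := by field_simp; ring

lemma heatKernel_sub_le {t τ M x : ℝ} (ht : 0 < t) (hτ : τ ∈ Icc (t / 2) (3 * t / 2))
    (hx : |x| ≤ M) (y : ℝ) :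
    heatKernel τ (x - y) ≤
      (√(π * t))⁻¹ * (exp (M ^ 2 / (3 * t)) * exp (-(1 / (6 * t)) * y ^ 2)) := by
  unfold heatKernel
  gcongr ?_ * ?_
  · exact inv_anti₀ (by positivity) (sqrt_le_sqrt (by nlinarith [hτ.1, pi_pos]))
  · exact exp_neg_sq_div_le ht hτ hx

lemma one_add_abs_sub_le {x y M : ℝ} (hx : |x| ≤ M) : 1 + |x - y| ≤ (1 + M) * (1 + |y|) := by
  nlinarith [abs_sub x y, abs_nonneg x, abs_nonneg y]

lemma abs_mul_heatKernel_sub_le {t τ M x y c : ℝ} (ht : 0 < t)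
    (hτ : τ ∈ Icc (t / 2) (3 * t / 2)) (hx : |x| ≤ M)
    (hc : |c| ≤ ((1 + 2 / t) * (1 + |x - y|)) ^ 2) :
    |c * heatKernel τ (x - y)| ≤ (1 + 2 / t) ^ 2 * (1 + M) ^ 2 *
      ((√(π * t))⁻¹ * exp (M ^ 2 / (3 * t))) * polyGaussian 2 (1 / (6 * t)) y := by
  have hτ0 : 0 < τ := by linarith [hτ.1]
  rw [abs_mul, abs_of_pos (heatKernel_pos hτ0 _)]
  calc |c| * heatKernel τ (x - y)
      ≤ ((1 + 2 / t) * ((1 + M) * (1 + |y|))) ^ 2 *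
          ((√(π * t))⁻¹ * (exp (M ^ 2 / (3 * t)) * exp (-(1 / (6 * t)) * y ^ 2))) :=
        mul_le_mul (hc.trans (by gcongr; exact one_add_abs_sub_le hx))
          (heatKernel_sub_le ht hτ hx y) (heatKernel_pos hτ0 _).le (by positivity)
    _ = _ := by unfold polyGaussian; ring

lemma exists_abs_heatKernel_sub_le {t : ℝ} (ht : 0 < t) (M : ℝ) :
    ∃ A, ∀ τ ∈ Icc (t / 2) (3 * t / 2), ∀ x, |x| ≤ M → ∀ y,
      |heatKernel τ (x - y)| ≤ A * polyGaussian 2 (1 / (6 * t)) y ∧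
      |heatKernel' τ (x - y)| ≤ A * polyGaussian 2 (1 / (6 * t)) y ∧
      |heatKernel'' τ (x - y)| ≤ A * polyGaussian 2 (1 / (6 * t)) y := by
  refine ⟨(1 + 2 / t) ^ 2 * (1 + M) ^ 2 * ((√(π * t))⁻¹ * exp (M ^ 2 / (3 * t))),
    fun τ hτ x hx y => ?_⟩
  have hτ0 : 0 < τ := by linarith [hτ.1]
  have hinv : 1 / τ ≤ 2 / t := by rw [div_le_div_iff₀ hτ0 ht]; linarith [hτ.1]
  have ha : 0 ≤ 2 / t := by positivity
  set u := |x - y|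
  have hu : 0 ≤ u := abs_nonneg _
  have hcoeff₀ : |1| ≤ ((1 + 2 / t) * (1 + u)) ^ 2 := by
    rw [abs_one]
    exact one_le_pow₀ (one_le_mul_of_one_le_of_one_le (by linarith) (by linarith))
  have hcoeff₁ : |-((x - y) / τ)| ≤ ((1 + 2 / t) * (1 + u)) ^ 2 := by
    calc |-((x - y) / τ)| = u * (1 / τ) := by
          rw [abs_neg, abs_div, abs_of_pos hτ0, div_eq_mul_one_div]
      _ ≤ u * (2 / t) := by gcongr
      _ ≤ _ := by nlinarith
  have hcoeff₂ : |(x - y) ^ 2 / τ ^ 2 - 1 / τ| ≤ ((1 + 2 / t) * (1 + u)) ^ 2 := by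
    calc |(x - y) ^ 2 / τ ^ 2 - 1 / τ| ≤ |(x - y) ^ 2 / τ ^ 2| + |1 / τ| := abs_sub _ _
      _ = (u * (1 / τ)) ^ 2 + 1 / τ := by
          rw [abs_of_nonneg (by positivity), abs_of_pos (by positivity), mul_pow, sq_abs]; ring
      _ ≤ (u * (2 / t)) ^ 2 + 2 / t := by gcongr
      _ ≤ _ := by nlinarith [mul_nonneg (mul_nonneg ha hu) (by positivity : 0 ≤ 1 + 2 / t + u)]
  refine ⟨?_, abs_mul_heatKernel_sub_le ht hτ hx hcoeff₁,
    abs_mul_heatKernel_sub_le ht hτ hx hcoeff₂⟩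
  rw [← one_mul (heatKernel τ (x - y))]
  exact abs_mul_heatKernel_sub_le ht hτ hx hcoeff₀

lemma hasDerivAt_heatSemigroup {f : ℝ → ℝ} (hf : Continuous f) (hpg : PolyGrowth f) {t : ℝ}
    (ht : 0 < t) (x : ℝ) :
    HasDerivAt (heatSemigroup t f) (∫ y, heatKernel' t (x - y) * f y) x :=
  hasDerivAt_integral_comp_sub_mul hf hpg (by positivity) (hasDerivAt_heatKernel ht.ne')
    (continuous_heatKernel' t)
    (fun M => (exists_abs_heatKernel_sub_le ht M).imp fun _ hA x hx y =>
      (hA t ⟨by linarith, by linarith⟩ x hx y).imp_right And.left) x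

lemma hasDerivAt_integral_heatKernel'_mul {f : ℝ → ℝ} (hf : Continuous f) (hpg : PolyGrowth f)
    {t : ℝ} (ht : 0 < t) (x : ℝ) :
    HasDerivAt (fun x => ∫ y, heatKernel' t (x - y) * f y)
      (∫ y, heatKernel'' t (x - y) * f y) x :=
  hasDerivAt_integral_comp_sub_mul hf hpg (by positivity) (hasDerivAt_heatKernel' ht.ne')
    (continuous_heatKernel'' t)
    (fun M => (exists_abs_heatKernel_sub_le ht M).imp fun _ hA x hx y =>
      (hA t ⟨by linarith, by linarith⟩ x hx y).2) x

lemma hasDerivAt_heatSemigroup_time {f : ℝ → ℝ} (hf : Continuous f) (hpg : PolyGrowth f) {t : ℝ}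
    (ht : 0 < t) (x : ℝ) :
    HasDerivAt (fun τ => heatSemigroup τ f x) (1 / 2 * ∫ y, heatKernel'' t (x - y) * f y) t := by
  obtain ⟨A, hA⟩ := exists_abs_heatKernel_sub_le ht |x|
  have hnear : Icc (t / 2) (3 * t / 2) ∈ 𝓝 t := Icc_mem_nhds (by linarith) (by linarith)
  have h := hasDerivAt_integral_mul_of_le_polyGaussian (K := fun τ y => heatKernel τ (x - y))
    (K' := fun τ y => 1 / 2 * heatKernel'' τ (x - y)) hf hpg (by positivity : 0 < 1 / (6 * t))
    (fun τ => by fun_prop) (by fun_prop)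
    (fun y => (hA t ⟨by linarith, by linarith⟩ x le_rfl y).1)
    (mem_of_superset hnear fun τ hτ y => by
      rw [abs_mul, abs_of_pos one_half_pos]
      linarith [(hA τ hτ x le_rfl y).2.2, abs_nonneg (heatKernel'' τ (x - y))])
    (mem_of_superset hnear fun τ hτ y =>
      hasDerivAt_heatKernel_time (by linarith [hτ.1]) (x - y))
  simp only [mul_assoc, integral_const_mul] at h
  exact h

/-- `u(t,x) = P_t f(x)` solves the heat equation `∂u/∂t = (1/2) ∂²u/∂x²`:
the space function is twice differentiable and the time derivative exists and
equals half the second space derivative. -/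
theorem heatSemigroup_solves_heat_equation
    (f : ℝ → ℝ) (hf : Continuous f) (hpg : PolyGrowth f) :
    ∀ t : ℝ, 0 < t → ∀ x : ℝ,
      DifferentiableAt ℝ (fun y => heatSemigroup t f y) x
      ∧ DifferentiableAt ℝ (deriv (fun y => heatSemigroup t f y)) x
      ∧ HasDerivAt (fun τ => heatSemigroup τ f x)
          ((1 / 2) * deriv (deriv (fun y => heatSemigroup t f y)) x) t := by
  intro t ht x
  have hderiv : deriv (fun y => heatSemigroup t f y) = fun x => ∫ y, heatKernel' t (x - y) * f y :=
    funext fun x => (hasDerivAt_heatSemigroup hf hpg ht x).deriv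
  have hderiv2 := hasDerivAt_integral_heatKernel'_mul hf hpg ht x
  rw [hderiv, hderiv2.deriv]
  exact ⟨(hasDerivAt_heatSemigroup hf hpg ht x).differentiableAt, hderiv2.differentiableAt,
    hasDerivAt_heatSemigroup_time hf hpg ht x⟩
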